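/- Lemma 4.3, equality (eq:12): Let n, n' ∈ N⁺ and c ∈ ℚ with c ≠ 0 and ω(n', n) = 1/c. Then (∏←_{p≥0} Ψ_{2c}[n'+pn]) ∘ Ψ_c[n] = Ψ_c[n] ∘ (∏←_{p≥1} (Ψ_{4c}[n'+pn] ∘ Ψ_c[2n'+(2p−1)n])) ∘ Ψ_{2c}[n'] as an identity of infinite products of endomorphisms of R (i.e., for every integer d ≥ 1 the two sides are congruent mod m^d after truncating each infinite product to indices p ≤ d); here the p-th factor of the middle product is the pair Ψ_{4c}[n'+pn] ∘ Ψ_c[2n'+(2p−1)n], and these pairs are composed in decreasing order of p from left to right. -/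

import Mathlib

open MvPowerSeries

noncomputable section

/-- `R = ℚ[[x₁, x₂]]`, formal power series in two variables over `ℚ`. -/
abbrev R2 : Type := MvPowerSeries (Fin 2) ℚ

/-- The skew-symmetric bilinear form `ω((a₁,a₂),(b₁,b₂)) = λ(a₁b₂ - a₂b₁)`. -/
def omegaForm (lam : ℚ) (a b : ℤ × ℤ) : ℚ := lam * (a.1 * b.2 - a.2 * b.1)

/-- Inclusion `ℕ² → ℤ²`. -/
def nn2z (n : ℕ × ℕ) : ℤ × ℤ := ((n.1 : ℤ), (n.2 : ℤ))

/-- The exponent `(n₁, n₂)` as a finitely supported function on `Fin 2`. -/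
def expOf (n : ℕ × ℕ) : Fin 2 →₀ ℕ := Finsupp.single 0 n.1 + Finsupp.single 1 n.2

open Classical in
/-- The binomial series `(1 + x^n)^q = Σ_{k ≥ 0} binom(q, k) x^{k n}`. -/
def binomSeries (n : ℕ × ℕ) (q : ℚ) : R2 := fun d =>
  if h : ∃ k : ℕ, d = k • expOf n then Ring.choose q h.choose else 0

/-- The maximal ideal `m = (x₁, x₂)` of `R`. -/
def maxIdeal : Ideal R2 := Ideal.span {(X 0 : R2), X 1}

/-- `f` is continuous for the `m`-adic topology. -/
def IsCont (f : R2 →ₐ[ℚ] R2) : Prop :=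
  ∀ d : ℕ, ∃ e : ℕ, ∀ r : R2, r ∈ maxIdeal ^ e → f r ∈ maxIdeal ^ d

/-- The standard basis `e₁ = (1,0)`, `e₂ = (0,1)`. -/
def basisVec : Fin 2 → ℕ × ℕ := ![(1, 0), (0, 1)]

/-- `f` is the continuous `ℚ`-algebra endomorphism `Ψ_c[n]` of `R`,
characterized by `Ψ_c[n](xᵢ) = xᵢ · (1 + x^n)^{c·ω(n, eᵢ)}`. -/
def IsDilog (lam c : ℚ) (n : ℕ × ℕ) (f : R2 →ₐ[ℚ] R2) : Prop :=
  IsCont f ∧ ∀ i : Fin 2,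
    f (X i) = X i * binomSeries n (c * omegaForm lam (nn2z n) (nn2z (basisVec i)))

/-- `f ≡ g mod m^d`, i.e. `f(xᵢ) - g(xᵢ) ∈ m^d` for `i = 1, 2`. -/
def ModEq (d : ℕ) (f g : R2 →ₐ[ℚ] R2) : Prop :=
  ∀ i : Fin 2, f (X i) - g (X i) ∈ maxIdeal ^ d

/-- `∏→_{p=a}^{b} f p`: left-to-right composition `f a ∘ f (a+1) ∘ ⋯ ∘ f b`
(the rightmost factor applied first). -/
def prodFwd (f : ℕ → (R2 →ₐ[ℚ] R2)) (a b : ℕ) : R2 →ₐ[ℚ] R2 :=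
  ((List.range (b + 1 - a)).map (fun p => f (a + p))).prod

/-- `∏←_{p=a}^{b} f p`: left-to-right composition `f b ∘ f (b-1) ∘ ⋯ ∘ f a`
(the rightmost factor applied first). -/
def prodBwd (f : ℕ → (R2 →ₐ[ℚ] R2)) (a b : ℕ) : R2 →ₐ[ℚ] R2 :=
  ((List.range (b + 1 - a)).reverse.map (fun p => f (a + p))).prod


namespace Aux

def dg (e : Fin 2 →₀ ℕ) : ℕ := e 0 + e 1

lemma dg_add (a b : Fin 2 →₀ ℕ) : dg (a + b) = dg a + dg b := by
  simp [dg, Finsupp.add_apply]; ring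

lemma finsupp2_ext {e f : Fin 2 →₀ ℕ} (h0 : e 0 = f 0) (h1 : e 1 = f 1) : e = f := by
  ext i
  fin_cases i <;> assumption

lemma eq_zero_of_dg_eq_zero {e : Fin 2 →₀ ℕ} (h : dg e = 0) : e = 0 := by
  have h0 : e 0 = 0 ∧ e 1 = 0 := by unfold dg at h; omega
  exact finsupp2_ext (by simp [h0.1]) (by simp [h0.2])

def OrdGe (k : ℕ) (f : R2) : Prop := ∀ e, dg e < k → coeff e f = 0

lemma OrdGe.mono {k l : ℕ} {f : R2} (h : OrdGe k f) (hl : l ≤ k) : OrdGe l f :=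
  fun e he => h e (lt_of_lt_of_le he hl)

lemma ordGe_mul {k l : ℕ} {f g : R2} (hf : OrdGe k f) (hg : OrdGe l g) :
    OrdGe (k + l) (f * g) := by
  intro e he
  rw [coeff_mul]
  refine Finset.sum_eq_zero fun p hp => ?_
  have hpe : p.1 + p.2 = e := Finset.HasAntidiagonal.mem_antidiagonal.mp hp
  have hd : dg p.1 + dg p.2 < k + l := by rw [← dg_add, hpe]; exact he
  rcases lt_or_ge (dg p.1) k with h1 | h1
  · rw [hf p.1 h1, zero_mul]
  · rw [hg p.2 (by omega), mul_zero]

lemma ordGe_X (i : Fin 2) : OrdGe 1 (X i : R2) := by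
  intro e he
  have : e = 0 := eq_zero_of_dg_eq_zero (by omega)
  subst this
  exact coeff_zero_X i

lemma ordGe_pow {f : R2} (h : OrdGe 1 f) : ∀ k, OrdGe k (f ^ k)
  | 0 => fun e he => absurd he (by omega)
  | k + 1 => by
      rw [pow_succ]
      exact (ordGe_mul (ordGe_pow h k) h :)

def ordIdeal (k : ℕ) : Ideal R2 where
  carrier := {f | OrdGe k f}
  zero_mem' := fun e _ => by simp
  add_mem' := fun {a b} ha hb e he => by rw [map_add, ha e he, hb e he, add_zero]
  smul_mem' := fun c f hf e he => by
    rw [smul_eq_mul, coeff_mul]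
    refine Finset.sum_eq_zero fun p hp => ?_
    have hpe : p.1 + p.2 = e := Finset.HasAntidiagonal.mem_antidiagonal.mp hp
    have : dg p.2 < k := by
      have := dg_add p.1 p.2
      rw [hpe] at this
      omega
    rw [hf p.2 this, mul_zero]

lemma X_mem_maxIdeal (i : Fin 2) : (X i : R2) ∈ maxIdeal := by
  apply Ideal.subset_span
  fin_cases i <;> simp

lemma maxIdeal_pow_le : ∀ k, maxIdeal ^ k ≤ ordIdeal k
  | 0 => by
      rw [pow_zero]
      intro f _ e he
      exact absurd he (by omega)
  | k + 1 => by
      rw [pow_succ]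
      refine Ideal.mul_le.mpr fun r hr s hs => ?_
      have hr' : OrdGe k r := maxIdeal_pow_le k hr
      have hs' : OrdGe 1 s := by
        have : maxIdeal ≤ ordIdeal 1 := by
          rw [maxIdeal, Ideal.span_le]
          rintro x hx
          simp only [Set.mem_insert_iff, Set.mem_singleton_iff] at hx
          rcases hx with rfl | rfl
          · exact ordGe_X 0
          · exact ordGe_X 1
        exact this hs
      exact ordGe_mul hr' hs'

lemma ordGe_of_mem {f : R2} {k : ℕ} (h : f ∈ maxIdeal ^ k) : OrdGe k f :=
  maxIdeal_pow_le k h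

lemma coeff_X_mul' (i : Fin 2) (g : R2) (e : Fin 2 →₀ ℕ) :
    coeff e (X i * g) =
      if Finsupp.single i 1 ≤ e then coeff (e - Finsupp.single i 1) g else 0 := by
  rw [X, coeff_monomial_mul]
  simp

lemma mem_of_ordGe {f : R2} : ∀ {k : ℕ}, OrdGe k f → f ∈ maxIdeal ^ k := by
  intro k
  induction k generalizing f with
  | zero => intro _; rw [pow_zero, Ideal.one_eq_top]; trivial
  | succ k ih =>
    intro hf
    set s0 : Fin 2 →₀ ℕ := Finsupp.single 0 1 with hs0
    set s1 : Fin 2 →₀ ℕ := Finsupp.single 1 1 with hs1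
    set f0 : R2 := fun e => f (e + s0) with hf0
    set f1 : R2 := fun e => if e 0 = 0 then f (e + s1) else 0 with hf1
    have hdec : f = X 0 * f0 + X 1 * f1 := by
      ext e
      rw [map_add, coeff_X_mul', coeff_X_mul']
      have hle0 : (s0 ≤ e) ↔ 1 ≤ e 0 := by
        rw [hs0, Finsupp.single_le_iff]
      have hle1 : (s1 ≤ e) ↔ 1 ≤ e 1 := by
        rw [hs1, Finsupp.single_le_iff]
      by_cases h0 : e 0 = 0
      · rw [if_neg (by rw [hle0]; omega)]
        by_cases h1 : e 1 = 0
        · rw [if_neg (by rw [hle1]; omega)]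
          have : e = 0 := finsupp2_ext h0 h1
          subst this
          have : coeff (0 : Fin 2 →₀ ℕ) f = 0 := hf 0 (by simp [dg])
          rw [this]; simp
        · rw [if_pos (by rw [hle1]; omega)]
          have hc : coeff (e - s1) f1 = f e := by
            show (if (e - s1) 0 = 0 then f ((e - s1) + s1) else 0) = f e
            have h00 : (e - s1) 0 = 0 := by
              rw [Finsupp.tsub_apply, hs1, Finsupp.single_apply]
              simp [h0]
            rw [if_pos h00]
            congr 1
            exact tsub_add_cancel_of_le (by rw [hle1]; omega)
          rw [hc]; show coeff e f = 0 + coeff e f; rw [zero_add]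
      · rw [if_pos (by rw [hle0]; omega)]
        have hc : coeff (e - s0) f0 = f e := by
          show f ((e - s0) + s0) = f e
          congr 1
          exact tsub_add_cancel_of_le (by rw [hle0]; omega)
        rw [hc]
        by_cases h1 : s1 ≤ e
        · rw [if_pos h1]
          have : coeff (e - s1) f1 = 0 := by
            show (if (e - s1) 0 = 0 then f ((e - s1) + s1) else 0) = 0
            have h00 : (e - s1) 0 ≠ 0 := by
              rw [Finsupp.tsub_apply, hs1, Finsupp.single_apply]
              simpa using h0
            rw [if_neg h00]
          rw [this]; show f e = f e + 0; rw [add_zero]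
        · rw [if_neg h1]; show f e = f e + 0; rw [add_zero]
    have hf0' : OrdGe k f0 := by
      intro e he
      show coeff (e + s0) f = 0
      have : dg (e + s0) < k + 1 := by
        rw [dg_add]
        have : dg s0 = 1 := by simp [dg, hs0]
        omega
      exact hf _ this
    have hf1' : OrdGe k f1 := by
      intro e he
      show (if e 0 = 0 then f (e + s1) else 0) = 0
      by_cases h0 : e 0 = 0
      · rw [if_pos h0]
        show coeff (e + s1) f = 0
        have : dg (e + s1) < k + 1 := by
          rw [dg_add]
          have : dg s1 = 1 := by simp [dg, hs1]
          omega
        exact hf _ this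
      · rw [if_neg h0]
    rw [hdec, pow_succ']
    exact Ideal.add_mem _
      (Ideal.mul_mem_mul (X_mem_maxIdeal 0) (ih hf0'))
      (Ideal.mul_mem_mul (X_mem_maxIdeal 1) (ih hf1'))

lemma eq_of_sub_mem_all {f g : R2} (h : ∀ k, f - g ∈ maxIdeal ^ k) : f = g := by
  ext e
  have := ordGe_of_mem (h (dg e + 1)) e (by omega)
  rw [map_sub] at this
  linarith [this]

-- Part B: binomial powers pw f q = (1+f)^q, appended after Part A inside namespace Aux

/-! ### choose as polynomial -/

def chp (k : ℕ) : Polynomial ℚ :=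
  (k.factorial : ℚ)⁻¹ • ((descPochhammer ℤ k).map (algebraMap ℤ ℚ))

lemma choose_eval (k : ℕ) (q : ℚ) : Ring.choose q k = (chp k).eval q := by
  have h := Ring.descPochhammer_eq_factorial_smul_choose (R := ℚ) q k
  have h2 : (chp k).eval q =
      (k.factorial : ℚ)⁻¹ * ((descPochhammer ℤ k).smeval q) := by
    rw [chp, Polynomial.eval_smul, ← Polynomial.aeval_eq_smeval,
      Polynomial.aeval_def, ← Polynomial.eval_map, smul_eq_mul]
  rw [h2, h, nsmul_eq_mul]
  have : (k.factorial : ℚ) ≠ 0 := Nat.cast_ne_zero.mpr (Nat.factorial_ne_zero k)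
  field_simp

def IsPolyIn (F : ℚ → ℚ) : Prop := ∃ p : Polynomial ℚ, ∀ q, F q = p.eval q

lemma IsPolyIn.const (a : ℚ) : IsPolyIn (fun _ => a) :=
  ⟨Polynomial.C a, fun q => (Polynomial.eval_C).symm⟩

lemma IsPolyIn.mul {F G : ℚ → ℚ} (hF : IsPolyIn F) (hG : IsPolyIn G) :
    IsPolyIn (fun q => F q * G q) := by
  obtain ⟨p, hp⟩ := hF; obtain ⟨r, hr⟩ := hG
  exact ⟨p * r, fun q => by show F q * G q = _; rw [hp, hr, Polynomial.eval_mul]⟩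

lemma IsPolyIn.sum {ι : Type*} (s : Finset ι) (F : ι → ℚ → ℚ)
    (h : ∀ i ∈ s, IsPolyIn (F i)) : IsPolyIn (fun q => ∑ i ∈ s, F i q) := by
  classical
  induction s using Finset.induction_on with
  | empty => exact ⟨0, by simp⟩
  | @insert a s' hni ih =>
    obtain ⟨p, hp⟩ := h a (Finset.mem_insert_self a s')
    obtain ⟨r, hr⟩ := ih (fun i hi => h i (Finset.mem_insert_of_mem hi))
    refine ⟨p + r, fun q => ?_⟩
    show ∑ i ∈ insert a s', F i q = _
    rw [Finset.sum_insert hni, Polynomial.eval_add, ← hp, ← hr]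

lemma isPolyIn_choose (k : ℕ) : IsPolyIn (fun q => Ring.choose q k) :=
  ⟨chp k, fun q => choose_eval k q⟩

lemma isPolyIn_choose_add (s : ℚ) (k : ℕ) :
    IsPolyIn (fun q => Ring.choose (s + q) k) := by
  refine ⟨(chp k).comp (Polynomial.C s + Polynomial.X), fun q => ?_⟩
  rw [Polynomial.eval_comp]
  simp only [Polynomial.eval_add, Polynomial.eval_C, Polynomial.eval_X]
  exact choose_eval k (s + q)

lemma eq_on_rat {F G : ℚ → ℚ} (hF : IsPolyIn F) (hG : IsPolyIn G)
    (h : ∀ N : ℕ, F (N : ℚ) = G (N : ℚ)) : ∀ q, F q = G q := by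
  obtain ⟨p, hp⟩ := hF; obtain ⟨r, hr⟩ := hG
  have : p = r := by
    apply Polynomial.eq_of_infinite_eval_eq
    apply Set.infinite_of_injective_forall_mem (f := fun N : ℕ => (N : ℚ))
    · exact fun a b hab => Nat.cast_injective hab
    · intro N
      show p.eval (N:ℚ) = r.eval (N:ℚ)
      rw [← hp, ← hr]; exact h N
  intro q; rw [hp, hr, this]

/-! ### the power series (1+f)^q -/

def pw (f : R2) (q : ℚ) : R2 :=
  fun e => coeff e (∑ k ∈ Finset.range (dg e + 1), Ring.choose q k • f ^ k)

def SN (f : R2) (q : ℚ) (N : ℕ) : R2 :=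
  ∑ k ∈ Finset.range N, Ring.choose q k • f ^ k

lemma coeff_SN (f : R2) (q : ℚ) (N : ℕ) (e : Fin 2 →₀ ℕ) :
    coeff e (SN f q N) = ∑ k ∈ Finset.range N, Ring.choose q k * coeff e (f ^ k) := by
  rw [SN, map_sum]
  exact Finset.sum_congr rfl fun k _ => coeff_smul _ _ _

lemma coeff_pw (f : R2) (q : ℚ) (e : Fin 2 →₀ ℕ) :
    coeff e (pw f q) =
      ∑ k ∈ Finset.range (dg e + 1), Ring.choose q k * coeff e (f ^ k) := by
  show coeff e (SN f q (dg e + 1)) = _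
  exact coeff_SN f q _ e

lemma coeff_pw_stab {f : R2} (hf : OrdGe 1 f) (q : ℚ) {e : Fin 2 →₀ ℕ} {N : ℕ}
    (hN : dg e + 1 ≤ N) :
    coeff e (pw f q) = ∑ k ∈ Finset.range N, Ring.choose q k * coeff e (f ^ k) := by
  rw [coeff_pw]
  apply Finset.sum_subset
  · exact Finset.range_subset_range.mpr hN
  · intro k _ hk
    rw [Finset.mem_range] at hk
    rw [ordGe_pow hf k e (by omega), mul_zero]

lemma coeff_pw_eq_SN {f : R2} (hf : OrdGe 1 f) (q : ℚ) {e : Fin 2 →₀ ℕ} {N : ℕ}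
    (hN : dg e + 1 ≤ N) : coeff e (pw f q) = coeff e (SN f q N) := by
  rw [coeff_pw_stab hf q hN, coeff_SN]

lemma pw_sub_SN_mem {f : R2} (hf : OrdGe 1 f) (q : ℚ) (N : ℕ) :
    pw f q - SN f q N ∈ maxIdeal ^ N := by
  apply mem_of_ordGe
  intro e he
  rw [map_sub, coeff_pw_eq_SN hf q (show dg e + 1 ≤ N by omega), sub_self]

lemma isPolyIn_coeff_pw (f : R2) (e : Fin 2 →₀ ℕ) :
    IsPolyIn (fun q => coeff e (pw f q)) := by
  have : (fun q => coeff e (pw f q)) =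
      fun q => ∑ k ∈ Finset.range (dg e + 1), Ring.choose q k * coeff e (f ^ k) := by
    funext q; exact coeff_pw f q e
  rw [this]
  exact IsPolyIn.sum _ _ fun k _ => (isPolyIn_choose k).mul (IsPolyIn.const _)

lemma ordGe_pow' {f : R2} {k : ℕ} (hf : OrdGe k f) : ∀ {j : ℕ}, 1 ≤ j → OrdGe k (f ^ j)
  | 1, _ => by rwa [pow_one]
  | j + 2, _ => by
      rw [pow_succ]
      exact (ordGe_mul (ordGe_pow' hf (by omega)) hf).mono (by omega)

lemma ordGe_pw_sub_one {f : R2} {k : ℕ} (hf : OrdGe k f) (hk : 1 ≤ k) (q : ℚ) :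
    OrdGe k (pw f q - 1) := by
  intro e he
  rw [map_sub, coeff_pw]
  have h1 : ∀ j ∈ Finset.range (dg e + 1), j ≠ 0 →
      Ring.choose q j * coeff e (f ^ j) = 0 := by
    intro j _ hj
    rw [ordGe_pow' hf (by omega) e he, mul_zero]
  rw [Finset.sum_eq_single 0 h1 (fun h => absurd (Finset.mem_range.mpr (by omega)) h)]
  simp [Ring.choose_zero_right]

lemma ordGe_one_of_ordGe {f : R2} {k : ℕ} (hf : OrdGe k f) (hk : 1 ≤ k) : OrdGe 1 f :=
  hf.mono hk

lemma pw_natCast {f : R2} (hf : OrdGe 1 f) (N : ℕ) : pw f (N : ℚ) = (1 + f) ^ N := by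
  ext e
  set N' := max (dg e + 1) (N + 1) with hN'
  rw [coeff_pw_stab hf _ (le_max_left _ _)]
  have hexp : (1 + f) ^ N = ∑ k ∈ Finset.range (N + 1), ((N.choose k : ℚ)) • f ^ k := by
    rw [add_comm (1:R2) f, add_pow]
    refine Finset.sum_congr rfl fun k _ => ?_
    rw [one_pow, mul_one, Nat.cast_smul_eq_nsmul, nsmul_eq_mul, mul_comm]
  rw [hexp, map_sum]
  rw [show ∑ k ∈ Finset.range (N+1), coeff e ((N.choose k : ℚ) • f ^ k) =
      ∑ k ∈ Finset.range N', coeff e ((N.choose k : ℚ) • f ^ k) by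
    apply Finset.sum_subset (Finset.range_subset_range.mpr (le_max_right _ _))
    intro k _ hk
    rw [Finset.mem_range] at hk
    have : N.choose k = 0 := Nat.choose_eq_zero_of_lt (by omega)
    rw [this]; simp]
  refine (Finset.sum_congr rfl fun k _ => ?_).symm
  rw [coeff_smul, Ring.choose_natCast]

lemma coeff_mul_congr {A A' B B' : R2} (e : Fin 2 →₀ ℕ)
    (hA : ∀ u, dg u ≤ dg e → coeff u A = coeff u A')
    (hB : ∀ u, dg u ≤ dg e → coeff u B = coeff u B') :
    coeff e (A * B) = coeff e (A' * B') := by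
  rw [coeff_mul, coeff_mul]
  refine Finset.sum_congr rfl fun p hp => ?_
  have hpe : p.1 + p.2 = e := Finset.HasAntidiagonal.mem_antidiagonal.mp hp
  have hd : dg p.1 + dg p.2 = dg e := by rw [← dg_add, hpe]
  rw [hA p.1 (by omega), hB p.2 (by omega)]

lemma isPolyIn_coeff_pw_mul (f g : R2) (e : Fin 2 →₀ ℕ) :
    IsPolyIn (fun q => coeff e (pw f q * pw g q)) := by
  have : (fun q => coeff e (pw f q * pw g q)) =
      fun q => ∑ p ∈ Finset.HasAntidiagonal.antidiagonal e, coeff p.1 (pw f q) * coeff p.2 (pw g q) := by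
    funext q; exact coeff_mul e _ _
  rw [this]
  exact IsPolyIn.sum _ _ fun p _ => (isPolyIn_coeff_pw f p.1).mul (isPolyIn_coeff_pw g p.2)

lemma isPolyIn_coeff_pw_mul_const (f B : R2) (e : Fin 2 →₀ ℕ) :
    IsPolyIn (fun q => coeff e (pw f q * B)) := by
  have : (fun q => coeff e (pw f q * B)) =
      fun q => ∑ p ∈ Finset.HasAntidiagonal.antidiagonal e, coeff p.1 (pw f q) * coeff p.2 B := by
    funext q; exact coeff_mul e _ _
  rw [this]
  exact IsPolyIn.sum _ _ fun p _ => (isPolyIn_coeff_pw f p.1).mul (IsPolyIn.const _)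

lemma isPolyIn_coeff_const_mul_pw (A f : R2) (e : Fin 2 →₀ ℕ) :
    IsPolyIn (fun q => coeff e (A * pw f q)) := by
  have : (fun q => coeff e (A * pw f q)) =
      fun q => ∑ p ∈ Finset.HasAntidiagonal.antidiagonal e, coeff p.1 A * coeff p.2 (pw f q) := by
    funext q; exact coeff_mul e _ _
  rw [this]
  exact IsPolyIn.sum _ _ fun p _ => (IsPolyIn.const _).mul (isPolyIn_coeff_pw f p.2)

lemma isPolyIn_coeff_pw_shift (f : R2) (e : Fin 2 →₀ ℕ) (s : ℚ) :
    IsPolyIn (fun q => coeff e (pw f (s + q))) := by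
  have : (fun q => coeff e (pw f (s + q))) =
      fun q => ∑ k ∈ Finset.range (dg e + 1),
        Ring.choose (s + q) k * coeff e (f ^ k) := by
    funext q; exact coeff_pw f (s + q) e
  rw [this]
  exact IsPolyIn.sum _ _ fun k _ => (isPolyIn_choose_add s k).mul (IsPolyIn.const _)

lemma pw_add_nat {f : R2} (hf : OrdGe 1 f) (N : ℕ) (r : ℚ) :
    pw f (↑N + r) = (1 + f) ^ N * pw f r := by
  ext e
  refine eq_on_rat (F := fun r => coeff e (pw f (↑N + r)))
    (G := fun r => coeff e ((1 + f) ^ N * pw f r))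
    (isPolyIn_coeff_pw_shift f e _) (isPolyIn_coeff_const_mul_pw _ f e) ?_ r
  intro M
  show coeff e (pw f (↑N + ↑M)) = coeff e ((1 + f) ^ N * pw f ↑M)
  have : ((N : ℚ) + (M : ℚ)) = ((N + M : ℕ) : ℚ) := by push_cast; ring
  rw [this, pw_natCast hf, pw_natCast hf, ← pow_add]

lemma pw_add {f : R2} (hf : OrdGe 1 f) (q r : ℚ) :
    pw f (q + r) = pw f q * pw f r := by
  ext e
  refine eq_on_rat (F := fun q => coeff e (pw f (q + r)))
    (G := fun q => coeff e (pw f q * pw f r)) ?_ (isPolyIn_coeff_pw_mul_const f _ e) ?_ q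
  · have : (fun q => coeff e (pw f (q + r))) =
        fun q => coeff e (pw f (r + q)) := by
      funext q; rw [add_comm]
    rw [this]
    exact isPolyIn_coeff_pw_shift f e r
  · intro M
    show coeff e (pw f (↑M + r)) = coeff e (pw f ↑M * pw f r)
    rw [pw_add_nat hf, pw_natCast hf]

lemma pw_zero {f : R2} (hf : OrdGe 1 f) : pw f 0 = 1 := by
  have := pw_natCast hf 0
  simpa using this

lemma pw_one {f : R2} (hf : OrdGe 1 f) : pw f 1 = 1 + f := by
  have := pw_natCast hf 1
  simpa using this

lemma pw_cancel {f : R2} (hf : OrdGe 1 f) (q : ℚ) : pw f q * pw f (-q) = 1 := by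
  rw [← pw_add hf, add_neg_cancel, pw_zero hf]

lemma pw_pow {f : R2} (hf : OrdGe 1 f) (q : ℚ) : ∀ m : ℕ, pw f q ^ m = pw f (m * q)
  | 0 => by rw [pow_zero, Nat.cast_zero, zero_mul, pw_zero hf]
  | m + 1 => by
      rw [pow_succ, pw_pow hf q m, ← pw_add hf]
      congr 1
      push_cast; ring

lemma ordGe_one_add_add_mul {f g : R2} (hf : OrdGe 1 f) (hg : OrdGe 1 g) :
    OrdGe 1 (f + g + f * g) := by
  intro e he
  rw [map_add, map_add, hf e he, hg e he,
    (ordGe_mul hf hg).mono (by omega) e he]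
  ring

lemma pw_mul_base {f g : R2} (hf : OrdGe 1 f) (hg : OrdGe 1 g) (q : ℚ) :
    pw (f + g + f * g) q = pw f q * pw g q := by
  ext e
  refine eq_on_rat (F := fun q => coeff e (pw (f + g + f * g) q))
    (G := fun q => coeff e (pw f q * pw g q))
    (isPolyIn_coeff_pw _ e) (isPolyIn_coeff_pw_mul f g e) ?_ q
  intro M
  show coeff e (pw (f + g + f * g) ↑M) = coeff e (pw f ↑M * pw g ↑M)
  rw [pw_natCast (ordGe_one_add_add_mul hf hg), pw_natCast hf, pw_natCast hg,
    ← mul_pow]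
  congr 2
  ring

/-! ### endomorphisms preserving the filtration -/

def Pres (Φ : R2 →ₐ[ℚ] R2) : Prop := ∀ (k : ℕ) (r : R2), r ∈ maxIdeal ^ k → Φ r ∈ maxIdeal ^ k

lemma pres_of_gen {Φ : R2 →ₐ[ℚ] R2} (h : ∀ i : Fin 2, Φ (X i) ∈ maxIdeal) : Pres Φ := by
  have hmap : Ideal.map (Φ : R2 →+* R2) maxIdeal ≤ maxIdeal := by
    rw [maxIdeal, Ideal.map_span]
    apply Ideal.span_le.mpr
    rintro x hx
    simp only [Set.image_insert_eq, Set.image_singleton, Set.mem_insert_iff,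
      Set.mem_singleton_iff] at hx
    rcases hx with rfl | rfl
    · exact h 0
    · exact h 1
  intro k r hr
  have h1 : Φ r ∈ Ideal.map (Φ : R2 →+* R2) (maxIdeal ^ k) :=
    Ideal.mem_map_of_mem _ hr
  rw [Ideal.map_pow] at h1
  exact Ideal.pow_right_mono hmap k h1

lemma pres_id : Pres (AlgHom.id ℚ R2) := fun _ _ h => h

lemma pres_comp {Φ Ψ : R2 →ₐ[ℚ] R2} (hΦ : Pres Φ) (hΨ : Pres Ψ) : Pres (Φ * Ψ) :=
  fun k r hr => by rw [AlgHom.mul_apply]; exact hΦ k _ (hΨ k r hr)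

lemma pw_hom (Φ : R2 →ₐ[ℚ] R2) (hΦ : Pres Φ) {f : R2} (hf : OrdGe 1 f) (q : ℚ) :
    Φ (pw f q) = pw (Φ f) q := by
  have hf1 : f ∈ maxIdeal := by
    have := mem_of_ordGe hf
    rwa [pow_one] at this
  have hΦf : OrdGe 1 (Φ f) := by
    apply ordGe_of_mem (k := 1)
    rw [pow_one]
    have := hΦ 1 f (by rwa [pow_one])
    rwa [pow_one] at this
  apply eq_of_sub_mem_all
  intro k
  have hSN : Φ (SN f q k) = SN (Φ f) q k := by
    rw [SN, map_sum, SN]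
    refine Finset.sum_congr rfl fun j _ => ?_
    rw [map_smul, map_pow]
  have h2 : Φ (pw f q) - pw (Φ f) q =
      Φ (pw f q - SN f q k) - (pw (Φ f) q - SN (Φ f) q k) := by
    rw [map_sub, hSN]; ring
  rw [h2]
  exact sub_mem (hΦ k _ (pw_sub_SN_mem hf q k)) (pw_sub_SN_mem hΦf q k)

/-! ### monomials and the binomial series -/

lemma ordGe_zero (f : R2) : OrdGe 0 f := fun _ he => absurd he (by omega)

lemma ordGe_add {k : ℕ} {f g : R2} (hf : OrdGe k f) (hg : OrdGe k g) :
    OrdGe k (f + g) := fun e he => by rw [map_add, hf e he, hg e he, add_zero]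

def XM (n : ℕ × ℕ) : R2 := X 0 ^ n.1 * X 1 ^ n.2

lemma XM_eq_monomial (n : ℕ × ℕ) : XM n = monomial (expOf n) 1 := by
  rw [XM, X_pow_eq, X_pow_eq, monomial_mul_monomial, one_mul, expOf]

lemma dg_expOf (n : ℕ × ℕ) : dg (expOf n) = n.1 + n.2 := by
  simp [dg, expOf, Finsupp.single_apply]

lemma one_le_deg {n : ℕ × ℕ} (hn : n ≠ 0) : 1 ≤ n.1 + n.2 := by
  rcases Nat.eq_zero_or_pos (n.1 + n.2) with h | h
  · exfalso; apply hn
    have h1 : n.1 = 0 := by omega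
    have h2 : n.2 = 0 := by omega
    exact Prod.ext h1 h2
  · omega

lemma ordGe_XM (n : ℕ × ℕ) : OrdGe (n.1 + n.2) (XM n) := by
  intro e he
  rw [XM_eq_monomial, coeff_monomial]
  rw [if_neg]
  intro hne
  rw [hne, dg_expOf] at he
  omega

lemma ordGe_one_XM {n : ℕ × ℕ} (hn : n ≠ 0) : OrdGe 1 (XM n) :=
  (ordGe_XM n).mono (one_le_deg hn)

lemma XM_mul (a b : ℕ × ℕ) : XM a * XM b = XM (a + b) := by
  show _ = X 0 ^ (a + b).1 * X 1 ^ (a + b).2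
  rw [Prod.fst_add, Prod.snd_add, pow_add, pow_add, XM, XM]
  ring

lemma XM_pow (n : ℕ × ℕ) : ∀ k : ℕ, XM n ^ k = XM (k • n)
  | 0 => by
      rw [pow_zero, zero_smul]
      show (1 : R2) = X 0 ^ 0 * X 1 ^ 0
      simp
  | k + 1 => by rw [pow_succ, XM_pow n k, XM_mul, succ_nsmul]

lemma expOf_smul (k : ℕ) (n : ℕ × ℕ) : expOf (k • n) = k • expOf n := by
  rw [expOf, expOf, smul_add, Finsupp.smul_single, Finsupp.smul_single]
  rfl

lemma binom_eq_pw (n : ℕ × ℕ) (hn : n ≠ 0) (q : ℚ) :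
    binomSeries n q = pw (XM n) q := by
  have hdgn : 1 ≤ dg (expOf n) := by rw [dg_expOf]; exact one_le_deg hn
  have huniq : ∀ k k' : ℕ, k • expOf n = k' • expOf n → k = k' := by
    intro k k' h
    have : dg (k • expOf n) = dg (k' • expOf n) := by rw [h]
    have h2 : ∀ j : ℕ, dg (j • expOf n) = j * dg (expOf n) := by
      intro j
      show (j • expOf n) 0 + (j • expOf n) 1 = _
      rw [Finsupp.smul_apply, Finsupp.smul_apply, smul_eq_mul, smul_eq_mul]
      show j * expOf n 0 + j * expOf n 1 = j * (expOf n 0 + expOf n 1)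
      ring
    rw [h2 k, h2 k'] at this
    exact Nat.eq_of_mul_eq_mul_right (by omega) this
  have hcoeffpow : ∀ (k : ℕ) (e : Fin 2 →₀ ℕ),
      coeff e (XM n ^ k) = if e = k • expOf n then 1 else 0 := by
    intro k e
    rw [XM_pow, XM_eq_monomial, expOf_smul, coeff_monomial]
  ext e
  rw [coeff_pw]
  classical
  show (if h : ∃ k : ℕ, e = k • expOf n then Ring.choose q h.choose else 0) = _
  by_cases hex : ∃ k : ℕ, e = k • expOf n
  · obtain ⟨k0, hk0⟩ := hex
    have hch : (⟨k0, hk0⟩ : ∃ k : ℕ, e = k • expOf n).choose = k0 := by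
      have hc := (⟨k0, hk0⟩ : ∃ k : ℕ, e = k • expOf n).choose_spec
      apply huniq
      rw [← hc, ← hk0]
    rw [dif_pos ⟨k0, hk0⟩]
    have hk0mem : k0 ∈ Finset.range (dg e + 1) := by
      rw [Finset.mem_range]
      have : dg e = k0 * dg (expOf n) := by
        rw [hk0]
        show (k0 • expOf n) 0 + (k0 • expOf n) 1 = _
        rw [Finsupp.smul_apply, Finsupp.smul_apply, smul_eq_mul, smul_eq_mul]
        show k0 * expOf n 0 + k0 * expOf n 1 = k0 * (expOf n 0 + expOf n 1)
        ring
      have := Nat.le_mul_of_pos_right k0 (show 0 < dg (expOf n) by omega)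
      omega
    rw [Finset.sum_eq_single k0]
    · rw [hcoeffpow, if_pos hk0, mul_one]
      exact congrArg (Ring.choose q) hch
    · intro j _ hj
      rw [hcoeffpow, if_neg, mul_zero]
      intro hje
      exact hj (huniq j k0 (by rw [← hje]; exact hk0))
    · intro habs
      exact absurd hk0mem habs
  · rw [dif_neg hex]
    symm
    apply Finset.sum_eq_zero
    intro j _
    rw [hcoeffpow, if_neg, mul_zero]
    intro hje
    exact hex ⟨j, hje⟩

/-! ### omega form arithmetic -/

def Wf (lam : ℚ) (a b : ℕ × ℕ) : ℚ := omegaForm lam (nn2z a) (nn2z b)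

lemma Wf_def (lam : ℚ) (a b : ℕ × ℕ) :
    Wf lam a b = lam * ((a.1 : ℚ) * (b.2 : ℚ) - (a.2 : ℚ) * (b.1 : ℚ)) := by
  simp only [Wf, omegaForm, nn2z]
  push_cast
  ring

lemma Wf_self (lam : ℚ) (a : ℕ × ℕ) : Wf lam a a = 0 := by
  rw [Wf_def]; ring

lemma Wf_anti (lam : ℚ) (a b : ℕ × ℕ) : Wf lam a b = -Wf lam b a := by
  rw [Wf_def, Wf_def]; ring

lemma Wf_add_right (lam : ℚ) (a b b' : ℕ × ℕ) :
    Wf lam a (b + b') = Wf lam a b + Wf lam a b' := by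
  rw [Wf_def, Wf_def, Wf_def, Prod.fst_add, Prod.snd_add]
  push_cast
  ring

lemma Wf_add_left (lam : ℚ) (a a' b : ℕ × ℕ) :
    Wf lam (a + a') b = Wf lam a b + Wf lam a' b := by
  rw [Wf_def, Wf_def, Wf_def, Prod.fst_add, Prod.snd_add]
  push_cast
  ring

lemma Wf_smul_right (lam : ℚ) (k : ℕ) (a b : ℕ × ℕ) :
    Wf lam a (k • b) = k * Wf lam a b := by
  rw [Wf_def, Wf_def, Prod.smul_fst, Prod.smul_snd, smul_eq_mul, smul_eq_mul]
  push_cast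
  ring

lemma Wf_smul_left (lam : ℚ) (k : ℕ) (a b : ℕ × ℕ) :
    Wf lam (k • a) b = k * Wf lam a b := by
  rw [Wf_def, Wf_def, Prod.smul_fst, Prod.smul_snd, smul_eq_mul, smul_eq_mul]
  push_cast
  ring

lemma Wf_decomp (lam : ℚ) (c : ℚ) (n a : ℕ × ℕ) :
    c * Wf lam n a =
      (a.1 : ℚ) * (c * Wf lam n ((1, 0) : ℕ × ℕ)) + (a.2 : ℚ) * (c * Wf lam n ((0, 1) : ℕ × ℕ)) := by
  rw [Wf_def, Wf_def, Wf_def]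
  push_cast
  ring

lemma basisVec_zero : basisVec 0 = ((1, 0) : ℕ × ℕ) := rfl
lemma basisVec_one : basisVec 1 = ((0, 1) : ℕ × ℕ) := rfl

/-! ### the dilog endomorphisms -/

section Dilog

variable {lam : ℚ}

lemma psi_X {c : ℚ} {n : ℕ × ℕ} {Φ : R2 →ₐ[ℚ] R2} (h : IsDilog lam c n Φ)
    (hn : n ≠ 0) (i : Fin 2) :
    Φ (X i) = X i * pw (XM n) (c * Wf lam n (basisVec i)) := by
  rw [h.2 i, binom_eq_pw n hn]
  rfl

lemma psi_pres {c : ℚ} {n : ℕ × ℕ} {Φ : R2 →ₐ[ℚ] R2} (h : IsDilog lam c n Φ)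
    (hn : n ≠ 0) : Pres Φ := by
  apply pres_of_gen
  intro i
  rw [psi_X h hn i]
  exact Ideal.mul_mem_right _ _ (X_mem_maxIdeal i)

lemma psi_XM {c : ℚ} {n : ℕ × ℕ} {Φ : R2 →ₐ[ℚ] R2} (h : IsDilog lam c n Φ)
    (hn : n ≠ 0) (a : ℕ × ℕ) :
    Φ (XM a) = XM a * pw (XM n) (c * Wf lam n a) := by
  have hXMn : OrdGe 1 (XM n) := ordGe_one_XM hn
  set w0 := c * Wf lam n (basisVec 0) with hw0
  set w1 := c * Wf lam n (basisVec 1) with hw1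
  calc Φ (XM a) = (X 0 * pw (XM n) w0) ^ a.1 * (X 1 * pw (XM n) w1) ^ a.2 := by
        rw [XM, map_mul, map_pow, map_pow, psi_X h hn 0, psi_X h hn 1]
    _ = XM a * (pw (XM n) w0 ^ a.1 * pw (XM n) w1 ^ a.2) := by
        rw [mul_pow, mul_pow, show XM a = X 0 ^ a.1 * X 1 ^ a.2 from rfl]; ring
    _ = XM a * (pw (XM n) (↑a.1 * w0) * pw (XM n) (↑a.2 * w1)) := by
        rw [pw_pow hXMn w0 a.1, pw_pow hXMn w1 a.2]
    _ = XM a * pw (XM n) (↑a.1 * w0 + ↑a.2 * w1) := by rw [pw_add hXMn]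
    _ = XM a * pw (XM n) (c * Wf lam n a) := by
        refine congrArg (XM a * pw (XM n) ·) ?_
        rw [hw0, hw1, basisVec_zero, basisVec_one]
        exact (Wf_decomp lam c n a).symm

lemma psi_pw {c : ℚ} {n : ℕ × ℕ} {Φ : R2 →ₐ[ℚ] R2} (h : IsDilog lam c n Φ)
    (hn : n ≠ 0) {f : R2} (hf : OrdGe 1 f) (q : ℚ) :
    Φ (pw f q) = pw (Φ f) q :=
  pw_hom Φ (psi_pres h hn) hf q

end Dilog

/-! ### congruences of endomorphisms -/

lemma sub_mul_mem {I : Ideal R2} {a b u v : R2} (h1 : a - b ∈ I) (h2 : u - v ∈ I) :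
    a * u - b * v ∈ I := by
  have h : a * u - b * v = a * (u - v) + (a - b) * v := by ring
  rw [h]
  exact add_mem (I.mul_mem_left _ h2) (I.mul_mem_right _ h1)

lemma sub_pow_mem {I : Ideal R2} {a b : R2} (h : a - b ∈ I) :
    ∀ k : ℕ, a ^ k - b ^ k ∈ I
  | 0 => by rw [pow_zero, pow_zero, sub_self]; exact zero_mem _
  | k + 1 => by
      rw [pow_succ, pow_succ]
      exact sub_mul_mem (sub_pow_mem h k) h

def EMod (d : ℕ) (f g : R2 →ₐ[ℚ] R2) : Prop := ∀ r, f r - g r ∈ maxIdeal ^ d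

lemma EMod.symm {d : ℕ} {f g : R2 →ₐ[ℚ] R2} (h : EMod d f g) : EMod d g f := by
  intro r
  have := neg_mem (h r)
  rwa [neg_sub] at this

lemma EMod.trans {d : ℕ} {f g h : R2 →ₐ[ℚ] R2} (h1 : EMod d f g) (h2 : EMod d g h) :
    EMod d f h := by
  intro r
  have := add_mem (h1 r) (h2 r)
  rwa [sub_add_sub_cancel] at this

lemma expOf_pair_eq {e : Fin 2 →₀ ℕ} : e = expOf (e 0, e 1) := by
  apply finsupp2_ext
  · simp [expOf, Finsupp.single_apply]
  · simp [expOf, Finsupp.single_apply]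

lemma expOf_inj {p p' : ℕ × ℕ} (h : expOf p = expOf p') : p = p' := by
  have h0 : expOf p 0 = expOf p' 0 := by rw [h]
  have h1 : expOf p 1 = expOf p' 1 := by rw [h]
  simp only [expOf, Finsupp.add_apply, Finsupp.single_apply] at h0 h1
  norm_num at h0 h1
  exact Prod.ext h0 h1

lemma EMod.ofGen {d : ℕ} {f g : R2 →ₐ[ℚ] R2} (hf : Pres f) (hg : Pres g)
    (h : ∀ i : Fin 2, f (X i) - g (X i) ∈ maxIdeal ^ d) : EMod d f g := by
  intro r
  classical
  set P : R2 := ∑ p ∈ Finset.range d ×ˢ Finset.range d, coeff (expOf p) r • XM p with hP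
  have hcXM : ∀ (p : ℕ × ℕ) (e : Fin 2 →₀ ℕ),
      coeff e (XM p) = if e = expOf p then 1 else 0 := by
    intro p e
    rw [XM_eq_monomial, coeff_monomial]
  have hPmem : r - P ∈ maxIdeal ^ d := by
    apply mem_of_ordGe
    intro e he
    have hcP : coeff e P = coeff e r := by
      rw [hP, map_sum]
      have hterm : ∀ p : ℕ × ℕ, coeff e (coeff (expOf p) r • XM p) =
          (if e = expOf p then coeff (expOf p) r else 0) := by
        intro p
        rw [coeff_smul, hcXM]
        by_cases hp : e = expOf p
        · rw [if_pos hp, if_pos hp, mul_one]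
        · rw [if_neg hp, if_neg hp, mul_zero]
      rw [Finset.sum_congr rfl fun p _ => hterm p]
      rw [Finset.sum_eq_single ((e 0, e 1) : ℕ × ℕ)]
      · rw [if_pos expOf_pair_eq, ← expOf_pair_eq]
      · intro p _ hp
        rw [if_neg]
        intro hep
        exact hp (expOf_inj (by rw [← hep, ← expOf_pair_eq])).symm
      · intro habs
        exfalso
        apply habs
        rw [Finset.mem_product, Finset.mem_range, Finset.mem_range]
        have h0 : e 0 ≤ dg e := by unfold dg; omega
        have h1 : e 1 ≤ dg e := by unfold dg; omega
        omega
    rw [map_sub, hcP, sub_self]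
  have hfgP : f P - g P ∈ maxIdeal ^ d := by
    rw [hP, map_sum, map_sum, ← Finset.sum_sub_distrib]
    apply Submodule.sum_mem
    intro p _
    rw [map_smul, map_smul, ← smul_sub, Algebra.smul_def]
    apply Ideal.mul_mem_left
    rw [show XM p = X 0 ^ p.1 * X 1 ^ p.2 from rfl, map_mul, map_mul,
      map_pow, map_pow, map_pow, map_pow]
    exact sub_mul_mem (sub_pow_mem (h 0) p.1) (sub_pow_mem (h 1) p.2)
  have hsplit : f r - g r = (f (r - P) - g (r - P)) + (f P - g P) := by
    rw [map_sub, map_sub]; ring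
  rw [hsplit]
  exact add_mem (sub_mem (hf d _ hPmem) (hg d _ hPmem)) hfgP

lemma EMod.comp {d : ℕ} {f f' g g' : R2 →ₐ[ℚ] R2} (hf : Pres f)
    (h1 : EMod d f f') (h2 : EMod d g g') : EMod d (f * g) (f' * g') := by
  intro r
  rw [AlgHom.mul_apply, AlgHom.mul_apply]
  have hs : f (g r) - f' (g' r) = f (g r - g' r) + (f (g' r) - f' (g' r)) := by
    rw [map_sub]; ring
  rw [hs]
  exact add_mem (hf d _ (h2 r)) (h1 (g' r))

def Adj (f g : R2 →ₐ[ℚ] R2) : Prop := ∀ d : ℕ, EMod d f g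

lemma Adj.symm {f g : R2 →ₐ[ℚ] R2} (h : Adj f g) : Adj g f := fun d => (h d).symm

lemma Adj.trans {f g h : R2 →ₐ[ℚ] R2} (h1 : Adj f g) (h2 : Adj g h) : Adj f h :=
  fun d => (h1 d).trans (h2 d)

lemma Adj.ofGenEq {f g : R2 →ₐ[ℚ] R2} (hf : Pres f) (hg : Pres g)
    (h : ∀ i : Fin 2, f (X i) = g (X i)) : Adj f g :=
  fun d => EMod.ofGen hf hg fun i => by rw [h i, sub_self]; exact zero_mem _

lemma Adj.refl (f : R2 →ₐ[ℚ] R2) : Adj f f := fun d r => by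
  rw [sub_self]; exact zero_mem _

lemma Adj.comp {f f' g g' : R2 →ₐ[ℚ] R2} (hf : Pres f)
    (h1 : Adj f f') (h2 : Adj g g') : Adj (f * g) (f' * g') :=
  fun d => EMod.comp hf (h1 d) (h2 d)

/-! ### nonzero vectors -/

lemma add_nz_left {x y : ℕ × ℕ} (hx : x ≠ 0) : x + y ≠ 0 := by
  intro h
  apply hx
  have h1 : x.1 + y.1 = 0 := congrArg Prod.fst h
  have h2 : x.2 + y.2 = 0 := congrArg Prod.snd h
  exact Prod.ext (show x.1 = 0 by omega) (show x.2 = 0 by omega)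

lemma add_nz_right {x y : ℕ × ℕ} (hy : y ≠ 0) : x + y ≠ 0 := by
  intro h
  apply hy
  have h1 : x.1 + y.1 = 0 := congrArg Prod.fst h
  have h2 : x.2 + y.2 = 0 := congrArg Prod.snd h
  exact Prod.ext (show y.1 = 0 by omega) (show y.2 = 0 by omega)

/-! ### the far lemma -/

lemma psi_far {lam c : ℚ} {m : ℕ × ℕ} {Φ : R2 →ₐ[ℚ] R2} (h : IsDilog lam c m Φ)
    (hm : m ≠ 0) {d : ℕ} (hd : d ≤ m.1 + m.2) : EMod d Φ (AlgHom.id ℚ R2) := by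
  apply EMod.ofGen (psi_pres h hm) pres_id
  intro i
  rw [psi_X h hm i]
  have hsub : X i * pw (XM m) (c * Wf lam m (basisVec i)) - (AlgHom.id ℚ R2) (X i) =
      X i * (pw (XM m) (c * Wf lam m (basisVec i)) - 1) := by
    rw [AlgHom.id_apply]; ring
  rw [hsub]
  apply Ideal.mul_mem_left
  apply mem_of_ordGe
  exact ((ordGe_pw_sub_one (ordGe_XM m) (one_le_deg hm) _).mono hd)

/-! ### merge -/

lemma merge {lam c1 c2 : ℚ} {v : ℕ × ℕ} (hv : v ≠ 0) {Φ1 Φ2 Φ3 : R2 →ₐ[ℚ] R2}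
    (h1 : IsDilog lam c1 v Φ1) (h2 : IsDilog lam c2 v Φ2)
    (h3 : IsDilog lam (c1 + c2) v Φ3) : Adj (Φ1 * Φ2) Φ3 := by
  apply Adj.ofGenEq (pres_comp (psi_pres h1 hv) (psi_pres h2 hv)) (psi_pres h3 hv)
  intro i
  have hV1 : OrdGe 1 (XM v) := ordGe_one_XM hv
  have hΦ1V : Φ1 (XM v) = XM v := by
    rw [psi_XM h1 hv v, Wf_self, mul_zero, pw_zero hV1, mul_one]
  rw [AlgHom.mul_apply, psi_X h2 hv i, map_mul, psi_X h1 hv i,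
    psi_pw h1 hv hV1, hΦ1V, psi_X h3 hv i, mul_assoc, ← pw_add hV1]
  exact congrArg (fun t => X i * pw (XM v) t) (by ring)

/-! ### the pentagon -/

lemma pentagon_core {A B : R2} (hA1 : OrdGe 1 A) (hB1 : OrdGe 1 B) (α β : ℚ) :
    pw B β * pw (A + A * B) α =
      pw A α * pw (A * B * pw A (-1)) (α + β) *
        pw (B * pw A (-1) * pw (A * B * pw A (-1)) (-1)) β := by
  have hAB1 : OrdGe 1 (A * B) := (ordGe_mul hA1 hB1).mono (by omega)
  have hu1 : OrdGe 1 (A * B * pw A (-1)) := ordGe_mul hAB1 (ordGe_zero _)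
  have hBU1 : OrdGe 1 (B * pw A (-1)) := ordGe_mul hB1 (ordGe_zero _)
  have hBUV1 : OrdGe 1 (B * pw A (-1) * pw (A * B * pw A (-1)) (-1)) :=
    ordGe_mul hBU1 (ordGe_zero _)
  have hUinv : pw A (-1) * (1 + A) = 1 := by
    rw [← pw_one hA1, ← pw_add hA1, show (-1 : ℚ) + 1 = 0 by ring, pw_zero hA1]
  have hVinv : pw (A * B * pw A (-1)) (-1) * (1 + A * B * pw A (-1)) = 1 := by
    rw [← pw_one hu1, ← pw_add hu1, show (-1 : ℚ) + 1 = 0 by ring, pw_zero hu1]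
  have K1 : pw (A * B * pw A (-1)) α * pw A α = pw (A + A * B) α := by
    rw [← pw_mul_base hu1 hA1 α]
    have hbase : A * B * pw A (-1) + A + A * B * pw A (-1) * A = A + A * B := by
      have h' : A * B * pw A (-1) + A + A * B * pw A (-1) * A =
          A + A * B * (pw A (-1) * (1 + A)) := by ring
      rw [h', hUinv, mul_one]
    rw [hbase]
  have K2 : pw (B * pw A (-1) * pw (A * B * pw A (-1)) (-1)) β *
      pw (A * B * pw A (-1)) β = pw B β := by
    rw [← pw_mul_base hBUV1 hu1 β]
    have hbase : B * pw A (-1) * pw (A * B * pw A (-1)) (-1) + A * B * pw A (-1) +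
        B * pw A (-1) * pw (A * B * pw A (-1)) (-1) * (A * B * pw A (-1)) = B := by
      have h' : B * pw A (-1) * pw (A * B * pw A (-1)) (-1) + A * B * pw A (-1) +
          B * pw A (-1) * pw (A * B * pw A (-1)) (-1) * (A * B * pw A (-1)) =
          A * B * pw A (-1) + B * pw A (-1) *
            (pw (A * B * pw A (-1)) (-1) * (1 + A * B * pw A (-1))) := by ring
      rw [h', hVinv, mul_one]
      have h'' : A * B * pw A (-1) + B * pw A (-1) =
          B * (pw A (-1) * (1 + A)) := by ring
      rw [h'', hUinv, mul_one]
    rw [hbase]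
  calc pw B β * pw (A + A * B) α
      = pw (A * B * pw A (-1)) α * pw A α *
          (pw (B * pw A (-1) * pw (A * B * pw A (-1)) (-1)) β *
            pw (A * B * pw A (-1)) β) := by rw [K1, K2]; ring
    _ = pw A α * (pw (A * B * pw A (-1)) α * pw (A * B * pw A (-1)) β) *
          pw (B * pw A (-1) * pw (A * B * pw A (-1)) (-1)) β := by ring
    _ = pw A α * pw (A * B * pw A (-1)) (α + β) *
          pw (B * pw A (-1) * pw (A * B * pw A (-1)) (-1)) β := by
        rw [pw_add hu1]

lemma pent {lam c' : ℚ} {a b : ℕ × ℕ} (ha : a ≠ 0) (hb : b ≠ 0)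
    {Φa Φb Φab : R2 →ₐ[ℚ] R2}
    (hIa : IsDilog lam c' a Φa) (hIb : IsDilog lam c' b Φb)
    (hIab : IsDilog lam c' (a + b) Φab)
    (hω : c' * Wf lam b a = 1) :
    Adj (Φb * Φa) (Φa * Φab * Φb) := by
  have hab : a + b ≠ 0 := add_nz_left ha
  have hA1 : OrdGe 1 (XM a) := ordGe_one_XM ha
  have hB1 : OrdGe 1 (XM b) := ordGe_one_XM hb
  have hAB1 : OrdGe 1 (XM a * XM b) := (ordGe_mul hA1 hB1).mono (by omega)
  have h_ab : c' * Wf lam a b = -1 := by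
    rw [Wf_anti lam a b, show c' * -Wf lam b a = -(c' * Wf lam b a) by ring, hω]
  have habb : c' * Wf lam (a + b) b = -1 := by
    rw [Wf_add_left, Wf_self, add_zero]; exact h_ab
  have haab : c' * Wf lam a (a + b) = -1 := by
    rw [Wf_add_right, Wf_self, zero_add]; exact h_ab
  have hΦaA : Φa (XM a) = XM a := by
    rw [psi_XM hIa ha a, Wf_self, mul_zero, pw_zero hA1, mul_one]
  apply Adj.ofGenEq
    (pres_comp (psi_pres hIb hb) (psi_pres hIa ha))
    (pres_comp (pres_comp (psi_pres hIa ha) (psi_pres hIab hab)) (psi_pres hIb hb))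
  intro i
  have hαβ : c' * Wf lam (a + b) (basisVec i) =
      c' * Wf lam a (basisVec i) + c' * Wf lam b (basisVec i) := by
    rw [Wf_add_left]; ring
  -- left-hand side
  rw [AlgHom.mul_apply, psi_X hIa ha i, map_mul, psi_X hIb hb i,
    psi_pw hIb hb hA1, psi_XM hIb hb a, hω, pw_one hB1]
  -- right-hand side
  rw [AlgHom.mul_apply, AlgHom.mul_apply, psi_X hIb hb i, map_mul,
    psi_X hIab hab i, psi_pw hIab hab hB1, psi_XM hIab hab b, habb, hαβ,
    ← XM_mul a b, map_mul, map_mul, psi_X hIa ha i,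
    psi_pw hIa ha hAB1, map_mul, hΦaA, psi_XM hIa ha b, h_ab,
    psi_pw hIa ha (ordGe_mul hB1 (ordGe_zero _)), map_mul,
    psi_XM hIa ha b, h_ab, psi_pw hIa ha hAB1, map_mul, hΦaA,
    psi_XM hIa ha b, h_ab]
  rw [show XM a * (1 + XM b) = XM a + XM a * XM b by ring,
    show XM a * (XM b * pw (XM a) (-1)) = XM a * XM b * pw (XM a) (-1) by ring,
    mul_assoc (X i), pentagon_core hA1 hB1]
  ring

/-! ### products -/

lemma prodBwd_succ (f : ℕ → (R2 →ₐ[ℚ] R2)) (a b : ℕ) (h : a ≤ b + 1) :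
    prodBwd f a (b + 1) = f (b + 1) * prodBwd f a b := by
  have hab : a + (b + 1 - a) = b + 1 := by omega
  rw [prodBwd, prodBwd, show b + 1 + 1 - a = (b + 1 - a) + 1 from by omega,
    List.range_succ, List.reverse_append, List.reverse_singleton,
    List.singleton_append, List.map_cons, List.prod_cons, hab]

lemma prodBwd_zero (f : ℕ → (R2 →ₐ[ℚ] R2)) : prodBwd f 0 0 = f 0 := by
  rw [prodBwd]
  norm_num

lemma prodBwd_empty (f : ℕ → (R2 →ₐ[ℚ] R2)) : prodBwd f 1 0 = 1 := by
  rw [prodBwd]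
  simp

lemma pres_one : Pres (1 : R2 →ₐ[ℚ] R2) := fun _ _ h => h

lemma pres_prodBwd (f : ℕ → (R2 →ₐ[ℚ] R2)) (hf : ∀ p, Pres (f p)) (a : ℕ) :
    ∀ b, Pres (prodBwd f a b) := by
  intro b
  rw [prodBwd]
  generalize (b + 1 - a) = k
  induction k with
  | zero => simpa using pres_one
  | succ k ih =>
    rw [List.range_succ, List.reverse_append, List.reverse_singleton,
      List.singleton_append, List.map_cons, List.prod_cons]
    exact pres_comp (hf _) ih

/-! ### transitivity setup -/

local infixl:50 " ≋ " => Adj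

instance : Trans (Adj) (Adj) (Adj) := ⟨Adj.trans⟩
instance : @Trans (R2 →ₐ[ℚ] R2) (R2 →ₐ[ℚ] R2) (R2 →ₐ[ℚ] R2) Eq Adj Adj :=
  ⟨fun h h' => by rw [h]; exact h'⟩
instance : @Trans (R2 →ₐ[ℚ] R2) (R2 →ₐ[ℚ] R2) (R2 →ₐ[ℚ] R2) Adj Eq Adj :=
  ⟨fun h h' => by rw [← h']; exact h⟩

section Main

variable {lam : ℚ} {Psi : ℚ → ℕ × ℕ → (R2 →ₐ[ℚ] R2)}
  (hPsi : ∀ (c : ℚ) (m : ℕ × ℕ), m ≠ 0 → IsDilog lam c m (Psi c m))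
  {n n' : ℕ × ℕ} (hn : n ≠ 0) (hn' : n' ≠ 0) {c : ℚ} (hc : c ≠ 0)
  (hw : Wf lam n' n = 1 / c)

lemma smul_nz {k : ℕ} {x : ℕ × ℕ} (hk : k ≠ 0) (hx : x ≠ 0) : k • x ≠ 0 := by
  intro h
  apply hx
  have h1 : k * x.1 = 0 := congrArg Prod.fst h
  have h2 : k * x.2 = 0 := congrArg Prod.snd h
  exact Prod.ext ((Nat.mul_eq_zero.mp h1).resolve_left hk)
    ((Nat.mul_eq_zero.mp h2).resolve_left hk)

include hPsi hn hn' hc hw in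
lemma star_lemma (p : ℕ) :
    Adj (Psi (2*c) (n' + p • n) * Psi c n)
      (Psi c n * Psi (2*c) (n' + (p+1) • n) * Psi c (2 • n' + (2*(p+1) - 1) • n) *
        Psi (2*c) (n' + p • n)) := by
  have hvp : n' + p • n ≠ 0 := add_nz_left hn'
  have hvp1 : n' + (p+1) • n ≠ 0 := add_nz_left hn'
  have hw1 : 2 • n' + (2*(p+1) - 1) • n ≠ 0 := add_nz_left (smul_nz (by omega) hn')
  have hV1 : n + (n' + p • n) = n' + (p+1) • n := by
    refine Prod.ext ?_ ?_
    · show n.1 + (n'.1 + p * n.1) = n'.1 + (p+1) * n.1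
      ring
    · show n.2 + (n'.2 + p * n.2) = n'.2 + (p+1) * n.2
      ring
  have hV2 : (n' + (p+1) • n) + (n' + p • n) = 2 • n' + (2*(p+1) - 1) • n := by
    refine Prod.ext ?_ ?_
    · show (n'.1 + (p+1) * n.1) + (n'.1 + p * n.1) = 2 * n'.1 + (2*(p+1) - 1) * n.1
      have : 2*(p+1) - 1 = 2*p + 1 := by omega
      rw [this]; ring
    · show (n'.2 + (p+1) * n.2) + (n'.2 + p * n.2) = 2 * n'.2 + (2*(p+1) - 1) * n.2
      have : 2*(p+1) - 1 = 2*p + 1 := by omega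
      rw [this]; ring
  have hS1 : c * Wf lam (n' + p • n) n = 1 := by
    have heq : Wf lam (n' + p • n) n = Wf lam n' n := by
      rw [Wf_def, Wf_def]
      simp only [Prod.fst_add, Prod.snd_add, Prod.smul_fst, Prod.smul_snd, smul_eq_mul]
      push_cast
      ring
    rw [heq, hw]
    field_simp
  have hS2 : c * Wf lam (n' + p • n) (n' + (p+1) • n) = 1 := by
    have heq : Wf lam (n' + p • n) (n' + (p+1) • n) = Wf lam n' n := by
      rw [Wf_def, Wf_def]
      simp only [Prod.fst_add, Prod.snd_add, Prod.smul_fst, Prod.smul_snd, smul_eq_mul]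
      push_cast
      ring
    rw [heq, hw]
    field_simp
  have hIcc : IsDilog lam (c + c) (n' + p • n) (Psi (2*c) (n' + p • n)) := by
    rw [show c + c = 2*c by ring]
    exact hPsi _ _ hvp
  have hIcc1 : IsDilog lam (c + c) (n' + (p+1) • n) (Psi (2*c) (n' + (p+1) • n)) := by
    rw [show c + c = 2*c by ring]
    exact hPsi _ _ hvp1
  have hIab1 : IsDilog lam c (n + (n' + p • n)) (Psi c (n' + (p+1) • n)) := by
    rw [hV1]
    exact hPsi _ _ hvp1
  have hIab2 : IsDilog lam c ((n' + (p+1) • n) + (n' + p • n))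
      (Psi c (2 • n' + (2*(p+1) - 1) • n)) := by
    rw [hV2]
    exact hPsi _ _ hw1
  have merge1 : Adj (Psi c (n' + p • n) * Psi c (n' + p • n)) (Psi (2*c) (n' + p • n)) :=
    merge hvp (hPsi c _ hvp) (hPsi c _ hvp) hIcc
  have merge2 : Adj (Psi c (n' + (p+1) • n) * Psi c (n' + (p+1) • n))
      (Psi (2*c) (n' + (p+1) • n)) :=
    merge hvp1 (hPsi c _ hvp1) (hPsi c _ hvp1) hIcc1
  have pent1 : Adj (Psi c (n' + p • n) * Psi c n)
      (Psi c n * Psi c (n' + (p+1) • n) * Psi c (n' + p • n)) :=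
    pent hn hvp (hPsi c n hn) (hPsi c _ hvp) hIab1 hS1
  have pent2 : Adj (Psi c (n' + p • n) * Psi c (n' + (p+1) • n))
      (Psi c (n' + (p+1) • n) * Psi c (2 • n' + (2*(p+1) - 1) • n) * Psi c (n' + p • n)) :=
    pent hvp1 hvp (hPsi c _ hvp1) (hPsi c _ hvp) hIab2 hS2
  have prPn : Pres (Psi c n) := psi_pres (hPsi c n hn) hn
  have prfp : Pres (Psi c (n' + p • n)) := psi_pres (hPsi c _ hvp) hvp
  have prfp1 : Pres (Psi c (n' + (p+1) • n)) := psi_pres (hPsi c _ hvp1) hvp1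
  have prgw : Pres (Psi c (2 • n' + (2*(p+1) - 1) • n)) := psi_pres (hPsi c _ hw1) hw1
  have prFp : Pres (Psi (2*c) (n' + p • n)) := psi_pres (hPsi _ _ hvp) hvp
  calc Psi (2*c) (n' + p • n) * Psi c n
      ≋ (Psi c (n' + p • n) * Psi c (n' + p • n)) * Psi c n :=
        Adj.comp prFp merge1.symm (Adj.refl _)
    _ = Psi c (n' + p • n) * (Psi c (n' + p • n) * Psi c n) := by
        simp only [mul_assoc]
    _ ≋ Psi c (n' + p • n) *
          (Psi c n * Psi c (n' + (p+1) • n) * Psi c (n' + p • n)) :=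
        Adj.comp prfp (Adj.refl _) pent1
    _ = (Psi c (n' + p • n) * Psi c n) *
          (Psi c (n' + (p+1) • n) * Psi c (n' + p • n)) := by
        simp only [mul_assoc]
    _ ≋ (Psi c n * Psi c (n' + (p+1) • n) * Psi c (n' + p • n)) *
          (Psi c (n' + (p+1) • n) * Psi c (n' + p • n)) :=
        Adj.comp (pres_comp prfp prPn) pent1 (Adj.refl _)
    _ = (Psi c n * Psi c (n' + (p+1) • n)) *
          ((Psi c (n' + p • n) * Psi c (n' + (p+1) • n)) * Psi c (n' + p • n)) := by
        simp only [mul_assoc]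
    _ ≋ (Psi c n * Psi c (n' + (p+1) • n)) *
          ((Psi c (n' + (p+1) • n) * Psi c (2 • n' + (2*(p+1) - 1) • n) *
            Psi c (n' + p • n)) * Psi c (n' + p • n)) :=
        Adj.comp (pres_comp prPn prfp1) (Adj.refl _)
          (Adj.comp (pres_comp prfp prfp1) pent2 (Adj.refl _))
    _ = (Psi c n) * ((Psi c (n' + (p+1) • n) * Psi c (n' + (p+1) • n)) *
          (Psi c (2 • n' + (2*(p+1) - 1) • n) *
            (Psi c (n' + p • n) * Psi c (n' + p • n)))) := by
        simp only [mul_assoc]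
    _ ≋ (Psi c n) * (Psi (2*c) (n' + (p+1) • n) *
          (Psi c (2 • n' + (2*(p+1) - 1) • n) * Psi (2*c) (n' + p • n))) :=
        Adj.comp prPn (Adj.refl _)
          (Adj.comp (pres_comp prfp1 prfp1) merge2
            (Adj.comp prgw (Adj.refl _) merge1))
    _ = Psi c n * Psi (2*c) (n' + (p+1) • n) * Psi c (2 • n' + (2*(p+1) - 1) • n) *
          Psi (2*c) (n' + p • n) := by
        simp only [mul_assoc]

include hPsi hn hn' hc hw in
lemma chain_lemma : ∀ t : ℕ,
    Adj (prodBwd (fun p => Psi (2*c) (n' + p • n)) 0 t * Psi c n)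
      (Psi c n * Psi (2*c) (n' + (t+1) • n) * Psi c (2 • n' + (2*(t+1) - 1) • n) *
        (prodBwd (fun p => Psi (4*c) (n' + p • n) * Psi c (2 • n' + (2*p - 1) • n)) 1 t *
          Psi (2*c) (n' + 0 • n))) := by
  intro t
  induction t with
  | zero =>
    rw [prodBwd_zero, prodBwd_empty, one_mul]
    exact star_lemma hPsi hn hn' hc hw 0
  | succ t ih =>
    have hvt1 : n' + (t+1) • n ≠ 0 := add_nz_left hn'
    have hwt1 : 2 • n' + (2*(t+1) - 1) • n ≠ 0 := add_nz_left (smul_nz (by omega) hn')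
    have hwt2 : 2 • n' + (2*(t+1+1) - 1) • n ≠ 0 := add_nz_left (smul_nz (by omega) hn')
    have hvt2 : n' + (t+1+1) • n ≠ 0 := add_nz_left hn'
    have hI4 : IsDilog lam (2*c + 2*c) (n' + (t+1) • n) (Psi (4*c) (n' + (t+1) • n)) := by
      rw [show 2*c + 2*c = 4*c by ring]
      exact hPsi _ _ hvt1
    have merge4 : Adj (Psi (2*c) (n' + (t+1) • n) * Psi (2*c) (n' + (t+1) • n))
        (Psi (4*c) (n' + (t+1) • n)) :=
      merge hvt1 (hPsi _ _ hvt1) (hPsi _ _ hvt1) hI4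
    have prPn : Pres (Psi c n) := psi_pres (hPsi c n hn) hn
    have prFt1 : Pres (Psi (2*c) (n' + (t+1) • n)) := psi_pres (hPsi _ _ hvt1) hvt1
    have prFt2 : Pres (Psi (2*c) (n' + (t+1+1) • n)) := psi_pres (hPsi _ _ hvt2) hvt2
    have prGt1 : Pres (Psi c (2 • n' + (2*(t+1) - 1) • n)) := psi_pres (hPsi _ _ hwt1) hwt1
    have prGt2 : Pres (Psi c (2 • n' + (2*(t+1+1) - 1) • n)) := psi_pres (hPsi _ _ hwt2) hwt2
    rw [prodBwd_succ _ 0 t (by omega), prodBwd_succ _ 1 t (by omega)]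
    calc (Psi (2*c) (n' + (t+1) • n) * prodBwd (fun p => Psi (2*c) (n' + p • n)) 0 t) *
          Psi c n
        = Psi (2*c) (n' + (t+1) • n) *
            (prodBwd (fun p => Psi (2*c) (n' + p • n)) 0 t * Psi c n) := by
          simp only [mul_assoc]
      _ ≋ Psi (2*c) (n' + (t+1) • n) *
            (Psi c n * Psi (2*c) (n' + (t+1) • n) * Psi c (2 • n' + (2*(t+1) - 1) • n) *
              (prodBwd (fun p => Psi (4*c) (n' + p • n) * Psi c (2 • n' + (2*p - 1) • n)) 1 t *
                Psi (2*c) (n' + 0 • n))) :=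
          Adj.comp prFt1 (Adj.refl _) ih
      _ = (Psi (2*c) (n' + (t+1) • n) * Psi c n) *
            (Psi (2*c) (n' + (t+1) • n) * (Psi c (2 • n' + (2*(t+1) - 1) • n) *
              (prodBwd (fun p => Psi (4*c) (n' + p • n) * Psi c (2 • n' + (2*p - 1) • n)) 1 t *
                Psi (2*c) (n' + 0 • n)))) := by
          simp only [mul_assoc]
      _ ≋ (Psi c n * Psi (2*c) (n' + (t+1+1) • n) * Psi c (2 • n' + (2*(t+1+1) - 1) • n) *
            Psi (2*c) (n' + (t+1) • n)) *
            (Psi (2*c) (n' + (t+1) • n) * (Psi c (2 • n' + (2*(t+1) - 1) • n) *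
              (prodBwd (fun p => Psi (4*c) (n' + p • n) * Psi c (2 • n' + (2*p - 1) • n)) 1 t *
                Psi (2*c) (n' + 0 • n)))) :=
          Adj.comp (pres_comp prFt1 prPn) (star_lemma hPsi hn hn' hc hw (t+1)) (Adj.refl _)
      _ = (Psi c n * Psi (2*c) (n' + (t+1+1) • n) * Psi c (2 • n' + (2*(t+1+1) - 1) • n)) *
            ((Psi (2*c) (n' + (t+1) • n) * Psi (2*c) (n' + (t+1) • n)) *
              (Psi c (2 • n' + (2*(t+1) - 1) • n) *
                (prodBwd (fun p => Psi (4*c) (n' + p • n) * Psi c (2 • n' + (2*p - 1) • n)) 1 t *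
                  Psi (2*c) (n' + 0 • n)))) := by
          simp only [mul_assoc]
      _ ≋ (Psi c n * Psi (2*c) (n' + (t+1+1) • n) * Psi c (2 • n' + (2*(t+1+1) - 1) • n)) *
            (Psi (4*c) (n' + (t+1) • n) *
              (Psi c (2 • n' + (2*(t+1) - 1) • n) *
                (prodBwd (fun p => Psi (4*c) (n' + p • n) * Psi c (2 • n' + (2*p - 1) • n)) 1 t *
                  Psi (2*c) (n' + 0 • n)))) :=
          Adj.comp (pres_comp (pres_comp prPn prFt2) prGt2) (Adj.refl _)
            (Adj.comp (pres_comp prFt1 prFt1) merge4 (Adj.refl _))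
      _ = Psi c n * Psi (2*c) (n' + (t+1+1) • n) * Psi c (2 • n' + (2*(t+1+1) - 1) • n) *
            ((Psi (4*c) (n' + (t+1) • n) * Psi c (2 • n' + (2*(t+1) - 1) • n) *
              prodBwd (fun p => Psi (4*c) (n' + p • n) * Psi c (2 • n' + (2*p - 1) • n)) 1 t) *
              Psi (2*c) (n' + 0 • n)) := by
          simp only [mul_assoc]

end Main

end Aux

theorem lemma_4_3_eq12 (lam : ℚ) (hlam : lam ≠ 0)
    (Psi : ℚ → ℕ × ℕ → (R2 →ₐ[ℚ] R2))
    (hPsi : ∀ (c : ℚ) (n : ℕ × ℕ), n ≠ 0 → IsDilog lam c n (Psi c n))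
    (n n' : ℕ × ℕ) (hn : n ≠ 0) (hn' : n' ≠ 0)
    (c : ℚ) (hc : c ≠ 0)
    (hw : omegaForm lam (nn2z n') (nn2z n) = 1 / c) :
    ∀ d : ℕ, 1 ≤ d →
      ModEq d
        ((prodBwd (fun p => Psi (2 * c) (n' + p • n)) 0 d).comp (Psi c n))
        (((Psi c n).comp
            (prodBwd
              (fun p => (Psi (4 * c) (n' + p • n)).comp
                (Psi c (2 • n' + (2 * p - 1) • n))) 1 d)).comp
          (Psi (2 * c) n')) := by
  intro d hd
  have hw' : Aux.Wf lam n' n = 1 / c := hw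
  have hch := (Aux.chain_lemma hPsi hn hn' hc hw' d) d
  have hvd1 : n' + (d+1) • n ≠ 0 := Aux.add_nz_left hn'
  have hwd1 : 2 • n' + (2*(d+1) - 1) • n ≠ 0 :=
    Aux.add_nz_left (Aux.smul_nz (by omega) hn')
  have h1 := Aux.one_le_deg hn
  have h2 := Aux.one_le_deg hn'
  have hb1 : d ≤ (n' + (d+1) • n).1 + (n' + (d+1) • n).2 := by
    show d ≤ (n'.1 + (d+1) * n.1) + (n'.2 + (d+1) * n.2)
    have h3 : (d+1) * n.1 + (d+1) * n.2 = (d+1) * (n.1 + n.2) := by ring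
    have h4 : (d+1) * 1 ≤ (d+1) * (n.1 + n.2) := Nat.mul_le_mul_left (d+1) h1
    omega
  have hb2 : d ≤ (2 • n' + (2*(d+1) - 1) • n).1 + (2 • n' + (2*(d+1) - 1) • n).2 := by
    show d ≤ (2 * n'.1 + (2*(d+1) - 1) * n.1) + (2 * n'.2 + (2*(d+1) - 1) * n.2)
    have h3 : (2*(d+1) - 1) * n.1 + (2*(d+1) - 1) * n.2 = (2*(d+1) - 1) * (n.1 + n.2) := by
      ring
    have h4 : (2*(d+1) - 1) * 1 ≤ (2*(d+1) - 1) * (n.1 + n.2) :=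
      Nat.mul_le_mul_left _ h1
    omega
  have hfar1 := Aux.psi_far (hPsi (2*c) _ hvd1) hvd1 hb1
  have hfar2 := Aux.psi_far (hPsi c _ hwd1) hwd1 hb2
  have prPn : Aux.Pres (Psi c n) := Aux.psi_pres (hPsi c n hn) hn
  have prFd1 : Aux.Pres (Psi (2*c) (n' + (d+1) • n)) :=
    Aux.psi_pres (hPsi _ _ hvd1) hvd1
  have prGd1 : Aux.Pres (Psi c (2 • n' + (2*(d+1) - 1) • n)) :=
    Aux.psi_pres (hPsi _ _ hwd1) hwd1
  set T : R2 →ₐ[ℚ] R2 :=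
    prodBwd (fun p => Psi (4*c) (n' + p • n) * Psi c (2 • n' + (2*p - 1) • n)) 1 d *
      Psi (2*c) (n' + 0 • n) with hT
  have step := Aux.EMod.comp prPn (Aux.Adj.refl (Psi c n) d)
    (Aux.EMod.comp prFd1 hfar1
      (Aux.EMod.comp prGd1 hfar2 (Aux.Adj.refl T d)))
  have hid : (AlgHom.id ℚ R2) * ((AlgHom.id ℚ R2) * T) = T := by
    rw [show (AlgHom.id ℚ R2) = (1 : R2 →ₐ[ℚ] R2) from rfl, one_mul, one_mul]
  rw [hid] at step
  have hassoc : Psi c n * Psi (2*c) (n' + (d+1) • n) *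
      Psi c (2 • n' + (2*(d+1) - 1) • n) * T =
      Psi c n * (Psi (2*c) (n' + (d+1) • n) *
        (Psi c (2 • n' + (2*(d+1) - 1) • n) * T)) := by
    simp only [mul_assoc]
  rw [← hassoc] at step
  have main := Aux.EMod.trans hch step
  have hzero : n' + (0 : ℕ) • n = n' := by simp
  have hfin : Psi c n * T =
      (Psi c n *
        prodBwd (fun p => Psi (4*c) (n' + p • n) * Psi c (2 • n' + (2*p - 1) • n)) 1 d) *
        Psi (2*c) n' := by
    rw [hT, hzero, mul_assoc]
  rw [hfin] at main
  intro i
  exact main (X i)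


end
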